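/- arXiv:1406.1951 — 2 statements merged into one kernel-verified Lean document; each statement's English description precedes it below -/
import Mathlib

section
/- Let Δ be a matroid of rank d on [n] with [d] a basis and without coloops. Then every independent set I ⊆ [n] \ [d] is contained in an independent set I' ⊆ [n] \ [d] such that Γ_{I'} has no coloop (equivalently h_{d−|I'|}(Γ_{I'}) > 0). -/
/-- A matroid independence system on ground set `Finset.range n`. -/
def IsMatroidOn (n : ℕ) (Indep : Finset ℕ → Prop) : Prop :=
  Indep ∅ ∧
  (∀ I, Indep I → I ⊆ Finset.range n) ∧
  (∀ I J, I ⊆ J → Indep J → Indep I) ∧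
  (∀ I J, Indep I → Indep J → I.card < J.card → ∃ v ∈ J \ I, Indep (insert v I))

/-- `B` is a basis: a maximal independent set. -/
def IsBasisOf (Indep : Finset ℕ → Prop) (B : Finset ℕ) : Prop :=
  Indep B ∧ ∀ C, Indep C → B ⊆ C → C = B

/-- Lexicographic order on finite subsets of ℕ: the smallest element where the
two sets differ belongs to the smaller set. -/
def lexLt (A B : Finset ℕ) : Prop :=
  ∃ m, m ∈ A ∧ m ∉ B ∧ ∀ k, k < m → (k ∈ A ↔ k ∈ B)

/-- Restriction set of a basis `B` in the lexicographic shelling: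
`R(B) = {x ∈ B : (B \ {x}) ∪ {y} is a basis for some y < x}`. -/
noncomputable def restrSet (Indep : Finset ℕ → Prop) (B : Finset ℕ) : Finset ℕ :=
  @Finset.filter _ (fun x => ∃ y, y < x ∧ IsBasisOf Indep (insert y (B.erase x)))
    (Classical.decPred _) B

/-- The finite set of bases of a matroid on ground set `Finset.range n`. -/
noncomputable def basesOf (Indep : Finset ℕ → Prop) (n : ℕ) : Finset (Finset ℕ) :=
  @Finset.filter _ (IsBasisOf Indep) (Classical.decPred _) (Finset.range n).powerset

/-- The number of bases. -/
noncomputable def numBases (Indep : Finset ℕ → Prop) (n : ℕ) : ℕ := (basesOf Indep n).card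

/-- The `i`-th entry of the h-vector: the number of bases whose restriction set
in the lexicographic shelling has cardinality `i`. -/
noncomputable def hVec (Indep : Finset ℕ → Prop) (n i : ℕ) : ℕ :=
  (@Finset.filter _ (fun B => (restrSet Indep B).card = i) (Classical.decPred _)
    (basesOf Indep n)).card

/-- The independence predicate of the matroid `Γ_I` on ground set `Finset.range d`:
`G` is independent iff `G ⊆ [d]` and `G ∪ I` is independent in the ambient matroid. -/
def GammaIndep (Indep : Finset ℕ → Prop) (d : ℕ) (I : Finset ℕ) : Finset ℕ → Prop :=
  fun G => G ⊆ Finset.range d ∧ Indep (G ∪ I)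

section Aux
variable {n : ℕ} {Indep : Finset ℕ → Prop}

lemma card_le_basis (hM : IsMatroidOn n Indep) {B I : Finset ℕ}
    (hB : IsBasisOf Indep B) (hI : Indep I) : I.card ≤ B.card := by
  by_contra h
  push_neg at h
  obtain ⟨v, hv, hvi⟩ := hM.2.2.2 B I hB.1 hI h
  rw [Finset.mem_sdiff] at hv
  have := hB.2 _ hvi (Finset.subset_insert _ _)
  exact hv.2 (this ▸ Finset.mem_insert_self v B)

lemma basis_of_card (hM : IsMatroidOn n Indep) {B I : Finset ℕ}
    (hB : IsBasisOf Indep B) (hI : Indep I) (hc : B.card ≤ I.card) : IsBasisOf Indep I :=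
  ⟨hI, fun C hC hIC =>
    (Finset.eq_of_subset_of_card_le hIC ((card_le_basis hM hB hC).trans hc)).symm⟩

lemma exists_basis (hM : IsMatroidOn n Indep) : ∃ B, IsBasisOf Indep B := by
  classical
  obtain ⟨B, hBmem, hmax⟩ := Finset.exists_max_image
    ((Finset.range n).powerset.filter Indep) Finset.card
    ⟨∅, Finset.mem_filter.mpr ⟨by simp, hM.1⟩⟩
  refine ⟨B, (Finset.mem_filter.mp hBmem).2, fun C hC hBC => ?_⟩
  exact (Finset.eq_of_subset_of_card_le hBC
    (hmax C (Finset.mem_filter.mpr ⟨Finset.mem_powerset.mpr (hM.2.1 C hC), hC⟩))).symm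

lemma extend_to_basis (hM : IsMatroidOn n Indep) {B : Finset ℕ} (hB : IsBasisOf Indep B) :
    ∀ k (I : Finset ℕ), B.card - I.card ≤ k → Indep I →
      ∃ B', IsBasisOf Indep B' ∧ I ⊆ B' ∧ B' ⊆ I ∪ B := by
  intro k
  induction k with
  | zero =>
    intro I hk hI
    exact ⟨I, basis_of_card hM hB hI (by omega), subset_rfl, Finset.subset_union_left⟩
  | succ k ih =>
    intro I hk hI
    by_cases h : B.card ≤ I.card
    · exact ⟨I, basis_of_card hM hB hI h, subset_rfl, Finset.subset_union_left⟩
    · push_neg at h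
      obtain ⟨v, hv, hvi⟩ := hM.2.2.2 I B hI hB.1 h
      rw [Finset.mem_sdiff] at hv
      obtain ⟨B', h1, h2, h3⟩ := ih (insert v I)
        (by rw [Finset.card_insert_of_notMem hv.2]; omega) hvi
      refine ⟨B', h1, (Finset.subset_insert _ _).trans h2, h3.trans ?_⟩
      intro x hx
      rcases Finset.mem_union.mp hx with hx | hx
      · rcases Finset.mem_insert.mp hx with rfl | hx
        · exact Finset.mem_union_right _ hv.1
        · exact Finset.mem_union_left _ hx
      · exact Finset.mem_union_right _ hx

variable {d : ℕ} {I : Finset ℕ}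

lemma gamma_matroid (hM : IsMatroidOn n Indep)
    (hI : Indep I) (hdisj : ∀ x ∈ I, x ∉ Finset.range d) :
    IsMatroidOn d (GammaIndep Indep d I) := by
  refine ⟨⟨by simp, by simpa using hI⟩, fun G hG => hG.1, ?_, ?_⟩
  · intro G H hGH hH
    exact ⟨hGH.trans hH.1, hM.2.2.1 _ _ (Finset.union_subset_union_left hGH) hH.2⟩
  · intro G H hG hH hc
    have hdG : Disjoint G I := Finset.disjoint_left.mpr fun x hxG hxI => hdisj x hxI (hG.1 hxG)
    have hdH : Disjoint H I := Finset.disjoint_left.mpr fun x hxH hxI => hdisj x hxI (hH.1 hxH)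
    have hcc : (G ∪ I).card < (H ∪ I).card := by
      rw [Finset.card_union_of_disjoint hdG, Finset.card_union_of_disjoint hdH]; omega
    obtain ⟨v, hv, hvi⟩ := hM.2.2.2 _ _ hG.2 hH.2 hcc
    rw [Finset.mem_sdiff] at hv
    have hvH : v ∈ H := by
      rcases Finset.mem_union.mp hv.1 with h | h
      · exact h
      · exact absurd (Finset.mem_union_right _ h) hv.2
    refine ⟨v, Finset.mem_sdiff.mpr ⟨hvH, fun h => hv.2 (Finset.mem_union_left _ h)⟩,
      Finset.insert_subset (hH.1 hvH) hG.1, ?_⟩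
    rw [Finset.insert_union]; exact hvi

lemma gamma_basis_card (hM : IsMatroidOn n Indep) (hB : IsBasisOf Indep (Finset.range d))
    (hdisj : ∀ x ∈ I, x ∉ Finset.range d)
    {G : Finset ℕ} (hG : IsBasisOf (GammaIndep Indep d I) G) : G.card + I.card = d := by
  have hdG : Disjoint G I := Finset.disjoint_left.mpr fun x hxG hxI => hdisj x hxI (hG.1.1 hxG)
  have h1 : (G ∪ I).card = G.card + I.card := Finset.card_union_of_disjoint hdG
  have hle : (G ∪ I).card ≤ d := by
    have := card_le_basis hM hB hG.1.2
    simpa using this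
  rcases eq_or_lt_of_le hle with h | h
  · omega
  · exfalso
    have hcc : (G ∪ I).card < (Finset.range d).card := by simpa using h
    obtain ⟨v, hv, hvi⟩ := hM.2.2.2 _ _ hG.1.2 hB.1 hcc
    rw [Finset.mem_sdiff] at hv
    have hvG : v ∉ G := fun h => hv.2 (Finset.mem_union_left _ h)
    have := hG.2 (insert v G)
      ⟨Finset.insert_subset hv.1 hG.1.1, by rw [Finset.insert_union]; exact hvi⟩
      (Finset.subset_insert _ _)
    exact hvG (this ▸ Finset.mem_insert_self v G)

lemma gamma_basis_of_card (hM : IsMatroidOn n Indep) (hB : IsBasisOf Indep (Finset.range d))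
    (hI : Indep I) (hdisj : ∀ x ∈ I, x ∉ Finset.range d)
    {G : Finset ℕ} (hG : GammaIndep Indep d I G) (hc : G.card + I.card = d) :
    IsBasisOf (GammaIndep Indep d I) G := by
  obtain ⟨G₀, hG₀⟩ := exists_basis (gamma_matroid hM hI hdisj)
  have := gamma_basis_card hM hB hdisj hG₀
  exact basis_of_card (gamma_matroid hM hI hdisj) hG₀ hG (by omega)

end Aux

lemma mem_basesOf {Indep : Finset ℕ → Prop} {n : ℕ} {B : Finset ℕ} :
    B ∈ basesOf Indep n ↔ B ⊆ Finset.range n ∧ IsBasisOf Indep B := by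
  unfold basesOf
  simp only [Finset.mem_filter, Finset.mem_powerset]

lemma mem_restrSet {Indep : Finset ℕ → Prop} {B : Finset ℕ} {x : ℕ} :
    x ∈ restrSet Indep B ↔
      x ∈ B ∧ ∃ y, y < x ∧ IsBasisOf Indep (insert y (B.erase x)) := by
  unfold restrSet
  simp only [Finset.mem_filter]

lemma hVec_pos {Indep : Finset ℕ → Prop} {n i : ℕ} (B : Finset ℕ)
    (h1 : B ∈ basesOf Indep n) (h2 : (restrSet Indep B).card = i) : 0 < hVec Indep n i := by
  unfold hVec
  rw [Finset.card_pos]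
  refine ⟨B, ?_⟩
  simp only [Finset.mem_filter]
  exact ⟨h1, h2⟩

section Main
variable {n d : ℕ} {Indep : Finset ℕ → Prop}

lemma step (hM : IsMatroidOn n Indep) (hB : IsBasisOf Indep (Finset.range d))
    (hnc : ¬ ∃ e, ∀ B, IsBasisOf Indep B → e ∈ B) :
    ∀ k (I : Finset ℕ), d - I.card ≤ k → Indep I → I ⊆ Finset.range n \ Finset.range d →
      ∃ I', I ⊆ I' ∧ I' ⊆ Finset.range n \ Finset.range d ∧ Indep I' ∧
        (¬ ∃ e, ∀ G, IsBasisOf (GammaIndep Indep d I') G → e ∈ G) := by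
  intro k
  induction k with
  | zero =>
    intro I hk hI hIsub
    refine ⟨I, subset_rfl, hIsub, hI, ?_⟩
    rintro ⟨e, he⟩
    have hdisj : ∀ x ∈ I, x ∉ Finset.range d := fun x hx => (Finset.mem_sdiff.mp (hIsub hx)).2
    obtain ⟨G₀, hG₀⟩ := exists_basis (gamma_matroid hM hI hdisj)
    have hc := gamma_basis_card hM hB hdisj hG₀
    have : e ∈ G₀ := he _ hG₀
    have : 0 < G₀.card := Finset.card_pos.mpr ⟨e, this⟩
    omega
  | succ k ih =>
    intro I hk hI hIsub
    have hdisj : ∀ x ∈ I, x ∉ Finset.range d := fun x hx => (Finset.mem_sdiff.mp (hIsub hx)).2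
    by_cases hcol : ∃ e, ∀ G, IsBasisOf (GammaIndep Indep d I) G → e ∈ G
    · obtain ⟨e, he⟩ := hcol
      obtain ⟨G₀, hG₀⟩ := exists_basis (gamma_matroid hM hI hdisj)
      have hc := gamma_basis_card hM hB hdisj hG₀
      have heG₀ : e ∈ G₀ := he _ hG₀
      have hed : e ∈ Finset.range d := hG₀.1.1 heG₀
      have heI : e ∉ I := fun h => hdisj e h hed
      push_neg at hnc
      obtain ⟨B, hBb, heB⟩ := hnc e
      obtain ⟨B', hB'b, hIB', hB'sub⟩ := extend_to_basis hM hBb B.card I (by omega) hI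
      have heB' : e ∉ B' := fun h => by
        rcases Finset.mem_union.mp (hB'sub h) with h | h
        · exact heI h
        · exact heB h
      have hcard' : B'.card = d := by
        have h1 := card_le_basis hM hB hB'b.1
        have h2 := card_le_basis hM hB'b hB.1
        simp only [Finset.card_range] at h1 h2
        omega
      by_cases hsub : B' \ I ⊆ Finset.range d
      · exfalso
        have hIsubB' : I ⊆ B' := hIB'
        have hunion : (B' \ I) ∪ I = B' := Finset.sdiff_union_of_subset hIsubB'
        have hGind : GammaIndep Indep d I (B' \ I) := ⟨hsub, by rw [hunion]; exact hB'b.1⟩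
        have hcardG : (B' \ I).card + I.card = d := by
          rw [Finset.card_sdiff_of_subset hIsubB']
          have := Finset.card_le_card hIsubB'
          omega
        have hGb := gamma_basis_of_card hM hB hI hdisj hGind hcardG
        exact heB' (Finset.mem_sdiff.mp (he _ hGb)).1
      · rw [Finset.not_subset] at hsub
        obtain ⟨v, hv, hvd⟩ := hsub
        rw [Finset.mem_sdiff] at hv
        have hvB' : v ∈ B' := hv.1
        have hvI : v ∉ I := hv.2
        have hvn : v ∈ Finset.range n := hM.2.1 B' hB'b.1 hvB'
        have hins : Indep (insert v I) :=
          hM.2.2.1 _ B' (Finset.insert_subset hvB' hIB') hB'b.1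
        have hIlt : I.card < d := by
          have : 0 < G₀.card := Finset.card_pos.mpr ⟨e, heG₀⟩
          omega
        obtain ⟨I', h1, h2, h3, h4⟩ := ih (insert v I)
          (by rw [Finset.card_insert_of_notMem hvI]; omega) hins
          (Finset.insert_subset (Finset.mem_sdiff.mpr ⟨hvn, hvd⟩) hIsub)
        exact ⟨I', (Finset.subset_insert _ _).trans h1, h2, h3, h4⟩
    · exact ⟨I, subset_rfl, hIsub, hI, hcol⟩

lemma top_h (hM : IsMatroidOn n Indep) (hB : IsBasisOf Indep (Finset.range d))
    {I : Finset ℕ} (hI : Indep I) (hdisj : ∀ x ∈ I, x ∉ Finset.range d)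
    (hnc : ¬ ∃ e, ∀ G, IsBasisOf (GammaIndep Indep d I) G → e ∈ G) :
    0 < hVec (GammaIndep Indep d I) d (d - I.card) := by
  set Γ := GammaIndep Indep d I with hΓ
  have hΓM : IsMatroidOn d Γ := gamma_matroid hM hI hdisj
  obtain ⟨B₀, hB₀⟩ := exists_basis hΓM
  have hne : (basesOf Γ d).Nonempty :=
    ⟨B₀, mem_basesOf.mpr ⟨hΓM.2.1 _ hB₀.1, hB₀⟩⟩
  obtain ⟨B, hBmem, hmin⟩ := Finset.exists_min_image (basesOf Γ d)
    (fun A => ∑ a ∈ A, 2 ^ (d - a)) hne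
  have hBb : IsBasisOf Γ B := (mem_basesOf.mp hBmem).2
  have hr : B.card + I.card = d := gamma_basis_card hM hB hdisj hBb
  push_neg at hnc
  have hres : restrSet Γ B = B := by
    have key : ∀ x ∈ B, ∃ y, y < x ∧ IsBasisOf Γ (insert y (B.erase x)) := ?_
    · exact Finset.Subset.antisymm (fun x hx => (mem_restrSet.mp hx).1)
        (fun x hx => mem_restrSet.mpr ⟨hx, key x hx⟩)
    intro x hx
    obtain ⟨G, hG, hxG⟩ := hnc x
    have hGc : G.card + I.card = d := gamma_basis_card hM hB hdisj hG
    have hxB : 0 < B.card := Finset.card_pos.mpr ⟨x, hx⟩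
    have h1 : (B.erase x).card < G.card := by
      rw [Finset.card_erase_of_mem hx]; omega
    have hBe : Γ (B.erase x) := hΓM.2.2.1 _ _ (Finset.erase_subset _ _) hBb.1
    obtain ⟨y, hy, hyi⟩ := hΓM.2.2.2 _ _ hBe hG.1 h1
    rw [Finset.mem_sdiff] at hy
    have hyx : y ≠ x := fun h => hxG (h ▸ hy.1)
    have hyd : y ∈ Finset.range d := hG.1.1 hy.1
    have hcard : (insert y (B.erase x)).card + I.card = d := by
      rw [Finset.card_insert_of_notMem hy.2, Finset.card_erase_of_mem hx]; omega
    have hbasis : IsBasisOf Γ (insert y (B.erase x)) :=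
      gamma_basis_of_card hM hB hI hdisj hyi hcard
    refine ⟨y, ?_, hbasis⟩
    by_contra hylt
    push_neg at hylt
    have hxy : x < y := lt_of_le_of_ne hylt (Ne.symm hyx)
    have hmem' : insert y (B.erase x) ∈ basesOf Γ d :=
      mem_basesOf.mpr ⟨hΓM.2.1 _ hbasis.1, hbasis⟩
    have hle := hmin _ hmem'
    rw [Finset.sum_insert hy.2] at hle
    have hsB : ∑ a ∈ B.erase x, 2 ^ (d - a) + 2 ^ (d - x) = ∑ a ∈ B, 2 ^ (d - a) :=
      Finset.sum_erase_add B _ hx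
    have hpow : 2 ^ (d - y) < 2 ^ (d - x) := by
      apply Nat.pow_lt_pow_right (by norm_num)
      have : y < d := Finset.mem_range.mp hyd
      omega
    omega
  exact hVec_pos B hBmem (by rw [hres]; omega)

end Main

/-- In a coloop-free matroid, every independent set `I ⊆ [n] \ [d]` is contained
in an independent `I' ⊆ [n] \ [d]` with `Γ_{I'}` coloop-free
(equivalently `h_{d-|I'|}(Γ_{I'}) > 0`). -/
theorem stmt_7 (n d : ℕ) (Indep : Finset ℕ → Prop)
    (hM : IsMatroidOn n Indep) (hB : IsBasisOf Indep (Finset.range d))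
    (hnc : ¬ ∃ e, ∀ B, IsBasisOf Indep B → e ∈ B)
    (I : Finset ℕ) (hI : Indep I) (hIsub : I ⊆ Finset.range n \ Finset.range d) :
    ∃ I', I ⊆ I' ∧ I' ⊆ Finset.range n \ Finset.range d ∧ Indep I' ∧
      (¬ ∃ e, ∀ G, IsBasisOf (GammaIndep Indep d I') G → e ∈ G) ∧
      0 < hVec (GammaIndep Indep d I') d (d - I'.card) := by
  obtain ⟨I', h1, h2, h3, h4⟩ := step hM hB hnc d I (Nat.sub_le _ _) hI hIsub
  have hdisj : ∀ x ∈ I', x ∉ Finset.range d := fun x hx => (Finset.mem_sdiff.mp (h2 hx)).2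
  exact ⟨I', h1, h2, h3, h4, top_h hM hB h3 hdisj h4⟩
end

section
/- Let Δ be a rank-4 matroid on [n] with [4] a basis, and let I = {x, y} ⊆ [n] \ [4] be independent with h(Γ_I) = (1, 2, 3), i.e., Γ_I is the full rank-2 uniform matroid on [4] (every 2-subset of [4] completes I to a basis of Δ). Then min{|B_x|, |B_y|} ≥ 3, where B_v is the set of bases of the rank-3 matroid Γ_{\{v\}} on [4]. -/
def triplesS : Finset (Finset ℕ) := {{0,1,2},{0,1,3},{0,2,3},{1,2,3}}

lemma indep_card_le {n : ℕ} {Indep : Finset ℕ → Prop} (hM : IsMatroidOn n Indep)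
    (hB : IsBasisOf Indep (Finset.range 4)) (J : Finset ℕ) (hJ : Indep J) : J.card ≤ 4 := by
  by_contra h
  push_neg at h
  obtain ⟨v, hv, hins⟩ := hM.2.2.2 (Finset.range 4) J hB.1 hJ (by simpa using h)
  have heq := hB.2 _ hins (Finset.subset_insert _ _)
  have : v ∈ Finset.range 4 := by rw [← heq]; exact Finset.mem_insert_self _ _
  exact (Finset.mem_sdiff.mp hv).2 this

lemma three_bases {n : ℕ} {Indep : Finset ℕ → Prop} (hM : IsMatroidOn n Indep)
    (hB : IsBasisOf Indep (Finset.range 4))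
    (v : ℕ) (hv : v ∉ Finset.range 4)
    (hpairs : ∀ G : Finset ℕ, G ⊆ Finset.range 4 → G.card = 2 → Indep (G ∪ {v})) :
    3 ≤ numBases (GammaIndep Indep 4 {v}) 4 := by
  classical
  -- every independent triple is a basis of Γ_v
  have htriple : ∀ T : Finset ℕ, T ⊆ Finset.range 4 → T.card = 3 → Indep (T ∪ {v}) →
      IsBasisOf (GammaIndep Indep 4 {v}) T := by
    intro T hT hT3 hTi
    refine ⟨⟨hT, hTi⟩, ?_⟩
    intro C hC hTC
    have hvC : v ∉ C := fun h => hv (hC.1 h)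
    have hcu : (C ∪ {v}).card = C.card + 1 := by
      have he : C ∪ {v} = insert v C := by ext a; simp [or_comm]
      rw [he, Finset.card_insert_of_notMem hvC]
    have h4 := indep_card_le hM hB _ hC.2
    have hle : C.card ≤ T.card := by omega
    exact (Finset.eq_of_subset_of_card_le hTC hle).symm
  -- exchange: of two triples sharing a pair, one is independent with v
  have hexch : ∀ p q r s : ℕ, p ∈ Finset.range 4 → q ∈ Finset.range 4 → p ≠ q →
      (∀ w ∈ Finset.range 4, w = p ∨ w = q ∨ w = r ∨ w = s) →
      Indep ({p, q, r} ∪ {v}) ∨ Indep ({p, q, s} ∪ {v}) := by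
    intro p q r s hp hq hpq hcov
    have hpi : Indep ({p, q} ∪ {v}) := by
      refine hpairs {p, q} ?_ (Finset.card_pair hpq)
      intro a ha
      simp only [Finset.mem_insert, Finset.mem_singleton] at ha
      rcases ha with h | h <;> subst h <;> assumption
    have hcard : ({p, q} ∪ {v} : Finset ℕ).card < (Finset.range 4).card := by
      have he : ({p, q} ∪ {v} : Finset ℕ) = insert p (insert q {v}) := by ext a; simp
      rw [Finset.card_range, he]
      have h1 := Finset.card_insert_le p (insert q ({v} : Finset ℕ))
      have h2 := Finset.card_insert_le q ({v} : Finset ℕ)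
      simp only [Finset.card_singleton] at h2
      omega
    obtain ⟨w, hw, hwi⟩ := hM.2.2.2 _ _ hpi hB.1 hcard
    rw [Finset.mem_sdiff] at hw
    have hwm : w ∉ ({p, q} ∪ {v} : Finset ℕ) := hw.2
    simp only [Finset.mem_union, Finset.mem_insert, Finset.mem_singleton] at hwm
    push_neg at hwm
    rcases hcov w hw.1 with h | h | h | h
    · exact absurd h hwm.1.1
    · exact absurd h hwm.1.2
    · left
      have : insert w ({p, q} ∪ {v}) = ({p, q, r} ∪ {v} : Finset ℕ) := by
        subst h; ext a
        simp only [Finset.mem_insert, Finset.mem_union, Finset.mem_singleton]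
        tauto
      rwa [this] at hwi
    · right
      have : insert w ({p, q} ∪ {v}) = ({p, q, s} ∪ {v} : Finset ℕ) := by
        subst h; ext a
        simp only [Finset.mem_insert, Finset.mem_union, Finset.mem_singleton]
        tauto
      rwa [this] at hwi
  have E : ∀ (p q r s : ℕ), p ∈ Finset.range 4 → q ∈ Finset.range 4 → p ≠ q →
      (∀ w ∈ Finset.range 4, w = p ∨ w = q ∨ w = r ∨ w = s) →
      ∀ (a b : Finset ℕ), a = {p, q, r} → b = {p, q, s} →
      Indep (a ∪ {v}) ∨ Indep (b ∪ {v}) := by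
    intro p q r s h1 h2 h3 h4 a b ha hb
    rw [ha, hb]; exact hexch p q r s h1 h2 h3 h4
  have huniq : ∀ a ∈ triplesS, ∀ b ∈ triplesS,
      ¬ Indep (a ∪ {v}) → ¬ Indep (b ∪ {v}) → a = b := by
    intro a ha b hb hna hnb
    simp only [triplesS, Finset.mem_insert, Finset.mem_singleton] at ha hb
    rcases ha with ha | ha | ha | ha <;> rcases hb with hb | hb | hb | hb <;> subst ha <;> subst hb
    · rfl
    · exact absurd (E 0 1 2 3 (by decide) (by decide) (by decide) (by decide) {0,1,2} {0,1,3} (by decide) (by decide)) (by tauto)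
    · exact absurd (E 0 2 1 3 (by decide) (by decide) (by decide) (by decide) {0,1,2} {0,2,3} (by decide) (by decide)) (by tauto)
    · exact absurd (E 1 2 0 3 (by decide) (by decide) (by decide) (by decide) {0,1,2} {1,2,3} (by decide) (by decide)) (by tauto)
    · exact absurd (E 0 1 3 2 (by decide) (by decide) (by decide) (by decide) {0,1,3} {0,1,2} (by decide) (by decide)) (by tauto)
    · rfl
    · exact absurd (E 0 3 1 2 (by decide) (by decide) (by decide) (by decide) {0,1,3} {0,2,3} (by decide) (by decide)) (by tauto)
    · exact absurd (E 1 3 0 2 (by decide) (by decide) (by decide) (by decide) {0,1,3} {1,2,3} (by decide) (by decide)) (by tauto)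
    · exact absurd (E 0 2 3 1 (by decide) (by decide) (by decide) (by decide) {0,2,3} {0,1,2} (by decide) (by decide)) (by tauto)
    · exact absurd (E 0 3 2 1 (by decide) (by decide) (by decide) (by decide) {0,2,3} {0,1,3} (by decide) (by decide)) (by tauto)
    · rfl
    · exact absurd (E 2 3 0 1 (by decide) (by decide) (by decide) (by decide) {0,2,3} {1,2,3} (by decide) (by decide)) (by tauto)
    · exact absurd (E 1 2 3 0 (by decide) (by decide) (by decide) (by decide) {1,2,3} {0,1,2} (by decide) (by decide)) (by tauto)
    · exact absurd (E 1 3 2 0 (by decide) (by decide) (by decide) (by decide) {1,2,3} {0,1,3} (by decide) (by decide)) (by tauto)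
    · exact absurd (E 2 3 1 0 (by decide) (by decide) (by decide) (by decide) {1,2,3} {0,2,3} (by decide) (by decide)) (by tauto)
    · rfl
  have hone : (triplesS.filter (fun T => ¬ Indep (T ∪ {v}))).card ≤ 1 := by
    rw [Finset.card_le_one]
    intro a ha b hb
    rw [Finset.mem_filter] at ha hb
    exact huniq a ha.1 b hb.1 ha.2 hb.2
  have htot := Finset.card_filter_add_card_filter_not
    (s := triplesS) (p := fun T => Indep (T ∪ {v}))
  have hScard : triplesS.card = 4 := by decide
  have h3 : 3 ≤ (triplesS.filter (fun T => Indep (T ∪ {v}))).card := by omega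
  have hsub : triplesS.filter (fun T => Indep (T ∪ {v})) ⊆
      basesOf (GammaIndep Indep 4 {v}) 4 := by
    intro T hT
    rw [Finset.mem_filter] at hT
    have hT4 : T ⊆ Finset.range 4 ∧ T.card = 3 := by
      have hmem := hT.1
      simp only [triplesS, Finset.mem_insert, Finset.mem_singleton] at hmem
      rcases hmem with h | h | h | h <;> subst h <;> exact ⟨by decide, by decide⟩
    unfold basesOf
    rw [Finset.mem_filter, Finset.mem_powerset]
    exact ⟨hT4.1, htriple T hT4.1 hT4.2 hT.2⟩
  calc 3 ≤ _ := h3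
    _ ≤ _ := Finset.card_le_card hsub

def pairsS : Finset (Finset ℕ) := {{0,1},{0,2},{0,3},{1,2},{1,3},{2,3}}

lemma card_filter3 {α : Type*} [DecidableEq α] (s : Finset α) (p q r : α → Prop)
    [DecidablePred p] [DecidablePred q] [DecidablePred r]
    (hpq : ∀ a, ¬(p a ∧ q a)) (hpr : ∀ a, ¬(p a ∧ r a)) (hqr : ∀ a, ¬(q a ∧ r a)) :
    (s.filter p).card + (s.filter q).card + (s.filter r).card ≤ s.card := by
  have d1 : Disjoint (s.filter p) (s.filter q) := by
    rw [Finset.disjoint_left]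
    intro a ha hb
    rw [Finset.mem_filter] at ha hb
    exact hpq a ⟨ha.2, hb.2⟩
  have d2 : Disjoint (s.filter p ∪ s.filter q) (s.filter r) := by
    rw [Finset.disjoint_union_left, Finset.disjoint_left, Finset.disjoint_left]
    constructor <;> intro a ha hb <;> rw [Finset.mem_filter] at ha hb
    · exact hpr a ⟨ha.2, hb.2⟩
    · exact hqr a ⟨ha.2, hb.2⟩
  calc (s.filter p).card + (s.filter q).card + (s.filter r).card
      = (s.filter p ∪ s.filter q ∪ s.filter r).card := by
        rw [Finset.card_union_of_disjoint d2, Finset.card_union_of_disjoint d1]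
    _ ≤ s.card := Finset.card_le_card (Finset.union_subset
        (Finset.union_subset (Finset.filter_subset _ _) (Finset.filter_subset _ _))
        (Finset.filter_subset _ _))

/-- Rank 4, `I = {x,y}` with `h(Γ_I) = (1,2,3)`: `min{|B_x|,|B_y|} ≥ 3`. -/
theorem stmt_12 (n : ℕ) (Indep : Finset ℕ → Prop)
    (hM : IsMatroidOn n Indep) (hB : IsBasisOf Indep (Finset.range 4))
    (x y : ℕ) (hx : x ∉ Finset.range 4) (hy : y ∉ Finset.range 4) (hxy : x ≠ y)
    (hI : Indep {x, y})
    (h0 : hVec (GammaIndep Indep 4 {x, y}) 4 0 = 1)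
    (h1 : hVec (GammaIndep Indep 4 {x, y}) 4 1 = 2)
    (h2 : hVec (GammaIndep Indep 4 {x, y}) 4 2 = 3) :
    3 ≤ numBases (GammaIndep Indep 4 {x}) 4 ∧
    3 ≤ numBases (GammaIndep Indep 4 {y}) 4 := by
  classical
  -- every basis of Γ_{x,y} has exactly two elements
  have hb2 : ∀ B, IsBasisOf (GammaIndep Indep 4 {x, y}) B →
      B ⊆ Finset.range 4 ∧ B.card = 2 := by
    intro B hBB
    obtain ⟨⟨hBsub, hBi⟩, hBmax⟩ := hBB
    have hdisj : Disjoint B ({x, y} : Finset ℕ) := by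
      rw [Finset.disjoint_left]
      intro a ha h
      simp only [Finset.mem_insert, Finset.mem_singleton] at h
      rcases h with h | h <;> subst h
      · exact hx (hBsub ha)
      · exact hy (hBsub ha)
    have hcu : (B ∪ {x, y}).card = B.card + 2 := by
      rw [Finset.card_union_of_disjoint hdisj, Finset.card_pair hxy]
    have h4 := indep_card_le hM hB _ hBi
    refine ⟨hBsub, ?_⟩
    by_contra hne
    have hlt : (B ∪ {x, y}).card < (Finset.range 4).card := by
      rw [Finset.card_range]; omega
    obtain ⟨w, hw, hwi⟩ := hM.2.2.2 _ _ hBi hB.1 hlt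
    rw [Finset.mem_sdiff] at hw
    have hwB : GammaIndep Indep 4 {x, y} (insert w B) :=
      ⟨Finset.insert_subset hw.1 hBsub, by rwa [Finset.insert_union]⟩
    have heq := hBmax _ hwB (Finset.subset_insert _ _)
    exact hw.2 (Finset.mem_union_left _ (heq ▸ Finset.mem_insert_self w B))
  have hmemP2 : ∀ B : Finset ℕ, B ⊆ Finset.range 4 → B.card = 2 → B ∈ pairsS := by
    have hdec : ∀ B ∈ (Finset.range 4).powerset, B.card = 2 → B ∈ pairsS := by decide
    intro B hsub hc
    exact hdec B (Finset.mem_powerset.mpr hsub) hc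
  have hsubP : basesOf (GammaIndep Indep 4 {x, y}) 4 ⊆ pairsS := by
    intro B hBmem
    unfold basesOf at hBmem
    rw [Finset.mem_filter] at hBmem
    obtain ⟨hs, hc⟩ := hb2 B hBmem.2
    exact hmemP2 B hs hc
  have hsum : hVec (GammaIndep Indep 4 {x, y}) 4 0 + hVec (GammaIndep Indep 4 {x, y}) 4 1 +
      hVec (GammaIndep Indep 4 {x, y}) 4 2 ≤ (basesOf (GammaIndep Indep 4 {x, y}) 4).card := by
    unfold hVec
    exact @card_filter3 (Finset ℕ) _ _ _ _ _ (Classical.decPred _) (Classical.decPred _)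
      (Classical.decPred _) (fun a h => by omega) (fun a h => by omega) (fun a h => by omega)
  rw [h0, h1, h2] at hsum
  have heqP : basesOf (GammaIndep Indep 4 {x, y}) 4 = pairsS :=
    Finset.eq_of_subset_of_card_le hsubP (by
      have : pairsS.card = 6 := by decide
      omega)
  have hpairs_xy : ∀ G : Finset ℕ, G ⊆ Finset.range 4 → G.card = 2 → Indep (G ∪ {x, y}) := by
    intro G hG hGc
    have hGm : G ∈ basesOf (GammaIndep Indep 4 {x, y}) 4 := by
      rw [heqP]; exact hmemP2 G hG hGc
    unfold basesOf at hGm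
    rw [Finset.mem_filter] at hGm
    exact hGm.2.1.2
  constructor
  · refine three_bases hM hB x hx (fun G hG hGc => ?_)
    exact hM.2.2.1 _ _ (Finset.union_subset_union_right (by simp)) (hpairs_xy G hG hGc)
  · refine three_bases hM hB y hy (fun G hG hGc => ?_)
    exact hM.2.2.1 _ _ (Finset.union_subset_union_right (by simp)) (hpairs_xy G hG hGc)
end
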